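/- Let G be a triangle-free graph of pathwidth k. Then any EPG-representation of G lies in a grid with at least (k+1)/6 rows and, symmetrically, at least (k+1)/6 columns; hence the grid area is Ω(k²). -/

import Mathlib

/-!
Record for each path its column range `[minX, maxX]`. Paths sharing a grid-edge share a grid point,
so `G` is a subgraph of the interval graph of these ranges. A path whose range contains column `x`
passes through column `x` (its column coordinate moves by at most one per step), so it uses one of
the at most `3h` grid-edges meeting that column; as `G` is triangle-free, each grid-edge lies on at
most two paths. Hence every column lies in at most `6h` ranges, and colouring the interval graph
greedily by left endpoints uses at most `6h` colours: `pw(G) ≤ 6h - 1`. Transposing the grid gives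
the bound for columns.
-/

/-- Two grid points are adjacent (at distance 1). -/
def adjPt (p q : ℤ × ℤ) : Prop :=
  (p.1 = q.1 ∧ (p.2 - q.2 = 1 ∨ q.2 - p.2 = 1)) ∨
  (p.2 = q.2 ∧ (p.1 - q.1 = 1 ∨ q.1 - p.1 = 1))

/-- A (simple) path in the rectangular integer grid. -/
structure GridPath where
  len : ℕ
  pts : Fin (len + 1) → ℤ × ℤ
  adj : ∀ i : Fin len, adjPt (pts i.castSucc) (pts i.succ)
  inj : Function.Injective pts

/-- The set of grid-edges used by a grid path. -/
def GridPath.edges (P : GridPath) : Set (Sym2 (ℤ × ℤ)) :=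
  {e | ∃ i : Fin P.len, e = s(P.pts i.castSucc, P.pts i.succ)}

/-- The set of grid-points used by a grid path. -/
def GridPath.points (P : GridPath) : Set (ℤ × ℤ) :=
  Set.range P.pts

/-- The grid path lies inside the `w × h` grid. -/
def GridPath.InGrid (P : GridPath) (w h : ℕ) : Prop :=
  ∀ p ∈ P.points, 1 ≤ p.1 ∧ p.1 ≤ (w : ℤ) ∧ 1 ≤ p.2 ∧ p.2 ≤ (h : ℤ)

/-- An EPG-representation: vertices are adjacent iff their paths share a grid-edge. -/
def IsEPGRep {V : Type*} (G : SimpleGraph V) (rep : V → GridPath) : Prop :=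
  ∀ v w : V, G.Adj v w ↔ v ≠ w ∧ ((rep v).edges ∩ (rep w).edges).Nonempty


/-- `l, r` give an interval representation of the graph `H`. -/
def IsIntervalRep {V : Type*} (H : SimpleGraph V) (l r : V → ℝ) : Prop :=
  (∀ v, l v ≤ r v) ∧
  ∀ v w : V, H.Adj v w ↔
    v ≠ w ∧ (Set.Icc (l v) (r v) ∩ Set.Icc (l w) (r w)).Nonempty

/-- `H` is an interval graph. -/
def IsIntervalGraph {V : Type*} (H : SimpleGraph V) : Prop :=
  ∃ l r : V → ℝ, IsIntervalRep H l r

/-- `pwLE G k` means the pathwidth of `G` is at most `k`: `G` is a subgraph of a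
`(k+1)`-colourable interval graph. -/
def pwLE {V : Type*} (G : SimpleGraph V) (k : ℕ) : Prop :=
  ∃ H : SimpleGraph V, G ≤ H ∧ IsIntervalGraph H ∧ H.Colorable (k + 1)

open Finset

namespace SimpleGraph

variable {V : Type*} [Fintype V] {G : SimpleGraph V}

theorem colorable_of_forall_card_adj_le_lt {α : Type*} [LinearOrder α] [DecidableRel G.Adj]
    (f : V → α) {n : ℕ} (hf : ∀ v, #{u | G.Adj u v ∧ f u ≤ f v} < n) : G.Colorable n := by
  classical
  suffices ∀ s : Finset V, ∃ c : V → Fin n, ∀ u ∈ s, ∀ v ∈ s, G.Adj u v → c u ≠ c v by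
    obtain ⟨c, hc⟩ := this univ
    exact ⟨Coloring.mk c fun {u v} huv => hc u (mem_univ u) v (mem_univ v) huv⟩
  intro s
  induction s using Finset.induction_on_max_value f with
  | empty => exact ⟨fun v => ⟨0, (hf v).trans_le' (Nat.zero_le _)⟩, by simp⟩
  | insert a s ha hmax ih =>
    obtain ⟨c, hc⟩ := ih
    have hlower : {u ∈ s | G.Adj u a} ⊆ ({u | G.Adj u a ∧ f u ≤ f a} : Finset V) := fun u hu => by
      simp only [mem_filter, mem_univ, true_and] at hu ⊢
      exact ⟨hu.2, hmax u hu.1⟩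
    obtain ⟨b, hb⟩ : ∃ b : Fin n, b ∉ {u ∈ s | G.Adj u a}.image c := by
      by_contra! hall
      have := calc n = #(univ : Finset (Fin n)) := by simp
        _ ≤ #({u ∈ s | G.Adj u a}.image c) := card_le_card fun b _ => hall b
        _ ≤ #{u | G.Adj u a ∧ f u ≤ f a} := card_image_le.trans (card_le_card hlower)
      exact (hf a).not_ge this
    have hfresh : ∀ u ∈ s, G.Adj u a → c u ≠ b := fun u hu hua hcb =>
      hb (mem_image.2 ⟨u, mem_filter.2 ⟨hu, hua⟩, hcb⟩)
    refine ⟨Function.update c a b, ?_⟩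
    simp only [mem_insert]
    rintro u (rfl | hu) v (rfl | hv) huv
    · exact (G.loopless.irrefl _ huv).elim
    · simp [Function.update_of_ne (ne_of_mem_of_not_mem hv ha), (hfresh v hv huv.symm).symm]
    · simp [Function.update_of_ne (ne_of_mem_of_not_mem hu ha), hfresh u hu huv]
    · simpa [Function.update_of_ne (ne_of_mem_of_not_mem hu ha),
        Function.update_of_ne (ne_of_mem_of_not_mem hv ha)] using hc u hu v hv huv

end SimpleGraph

section IntervalGraph

variable {V : Type*} [Fintype V]

theorem IsIntervalRep.colorable {H : SimpleGraph V} {l r : V → ℝ} (hH : IsIntervalRep H l r)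
    {n : ℕ} (hply : ∀ v, #{u | l u ≤ l v ∧ l v ≤ r u} ≤ n) : H.Colorable n := by
  classical
  refine SimpleGraph.colorable_of_forall_card_adj_le_lt l fun v => ?_
  calc #{u | H.Adj u v ∧ l u ≤ l v}
      ≤ #(({u | l u ≤ l v ∧ l v ≤ r u} : Finset V).erase v) := by
        refine card_le_card fun u hu => ?_
        simp only [mem_filter, mem_univ, true_and, mem_erase] at hu ⊢
        obtain ⟨hne, t, ⟨-, htu⟩, hvt, -⟩ := (hH.2 u v).1 hu.1
        exact ⟨hne, hu.2, hvt.trans htu⟩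
    _ < #({u | l u ≤ l v ∧ l v ≤ r u} : Finset V) := card_erase_lt_of_mem (by simp [hH.1 v])
    _ ≤ n := hply v

def intervalGraph (l r : V → ℝ) : SimpleGraph V where
  Adj u v := u ≠ v ∧ (Set.Icc (l u) (r u) ∩ Set.Icc (l v) (r v)).Nonempty
  symm := ⟨fun _ _ h => ⟨h.1.symm, by rw [Set.inter_comm]; exact h.2⟩⟩
  loopless := ⟨fun _ h => h.1 rfl⟩

theorem pwLE_of_intervals (G : SimpleGraph V) (l r : V → ℝ) (hlr : ∀ v, l v ≤ r v)
    (hG : ∀ u v, G.Adj u v → (Set.Icc (l u) (r u) ∩ Set.Icc (l v) (r v)).Nonempty) {n : ℕ}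
    (hply : ∀ v, #{u | l u ≤ l v ∧ l v ≤ r u} ≤ n) : pwLE G (n - 1) := by
  have hrep : IsIntervalRep (intervalGraph l r) l r := ⟨hlr, fun _ _ => Iff.rfl⟩
  refine ⟨intervalGraph l r, fun u v huv => ⟨huv.ne, hG u v huv⟩, ⟨l, r, hrep⟩, ?_⟩
  rcases n with _ | n
  · have := SimpleGraph.colorable_zero_iff.1 (hrep.colorable hply)
    exact .of_isEmpty _
  · exact hrep.colorable hply

end IntervalGraph

theorem exists_eq_of_map_add_one_le {f : ℕ → ℤ} (hf : ∀ k, f (k + 1) ≤ f k + 1) {a b : ℕ}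
    (hab : a ≤ b) {x : ℤ} (ha : f a ≤ x) (hb : x ≤ f b) : ∃ k, f k = x := by
  induction b, hab using Nat.le_induction with
  | base => exact ⟨a, le_antisymm ha hb⟩
  | succ b _ ih =>
    rcases le_or_gt x (f b) with hx | hx
    · exact ih hx
    · exact ⟨b + 1, le_antisymm (by linarith [hf b]) hb⟩

theorem Set.ordConnected_range_of_abs_sub_le_one {n : ℕ} {f : Fin (n + 1) → ℤ}
    (hf : ∀ i : Fin n, |f i.succ - f i.castSucc| ≤ 1) : (Set.range f).OrdConnected := by
  let g : ℕ → ℤ := fun k => f ⟨min k n, by omega⟩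
  have hg_step : ∀ k, |g (k + 1) - g k| ≤ 1 := fun k => by
    rcases lt_or_ge k n with hk | hk
    · have e₀ : (⟨min k n, by omega⟩ : Fin (n + 1)) = (⟨k, hk⟩ : Fin n).castSucc :=
        Fin.ext (by simp; omega)
      have e₁ : (⟨min (k + 1) n, by omega⟩ : Fin (n + 1)) = (⟨k, hk⟩ : Fin n).succ :=
        Fin.ext (by simp; omega)
      simpa only [g, e₀, e₁] using hf ⟨k, hk⟩
    · simp [g, Nat.min_eq_right hk, Nat.min_eq_right (Nat.le_succ_of_le hk)]
  have hg_val : ∀ i : Fin (n + 1), g i = f i := fun i => by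
    simp [g, Nat.min_eq_left (Nat.le_of_lt_succ i.isLt)]
  refine ⟨?_⟩
  rintro _ ⟨i, rfl⟩ _ ⟨j, rfl⟩ x ⟨hix, hxj⟩
  rcases le_total (i : ℕ) j with hij | hji
  · obtain ⟨k, rfl⟩ := exists_eq_of_map_add_one_le (f := g)
      (fun k => by linarith [(abs_le.1 (hg_step k)).2]) hij (x := x)
      (by rwa [hg_val]) (by rwa [hg_val])
    exact ⟨_, rfl⟩
  · obtain ⟨k, hk⟩ := exists_eq_of_map_add_one_le (f := fun k => -g k)
      (fun k => by linarith [(abs_le.1 (hg_step k)).1]) hji (x := -x)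
      (by simpa [hg_val]) (by simpa [hg_val])
    exact ⟨_, neg_inj.1 hk⟩

theorem adjPt_comm {p q : ℤ × ℤ} : adjPt p q ↔ adjPt q p := by
  unfold adjPt; omega

noncomputable def columnEdges (h : ℕ) (x : ℤ) : Finset (Sym2 (ℤ × ℤ)) :=
  (Icc (1 : ℤ) h).biUnion fun y =>
    {s((x, y), (x, y + 1)), s((x - 1, y), (x, y)), s((x, y), (x + 1, y))}

theorem card_columnEdges_le (h : ℕ) (x : ℤ) : #(columnEdges h x) ≤ 3 * h := by
  calc #(columnEdges h x) ≤ ∑ _y ∈ Icc (1 : ℤ) h, 3 :=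
        card_biUnion_le.trans (sum_le_sum fun _ _ => card_le_three)
    _ = 3 * h := by simp [mul_comm]

theorem mk_mem_columnEdges {h : ℕ} {p q : ℤ × ℤ} (hpq : adjPt p q)
    (hp : 1 ≤ p.2 ∧ p.2 ≤ h) (hq : 1 ≤ q.2 ∧ q.2 ≤ h) : s(p, q) ∈ columnEdges h p.1 := by
  obtain ⟨px, py⟩ := p
  obtain ⟨qx, qy⟩ := q
  simp only [adjPt] at hpq hp hq
  rcases hpq with ⟨rfl, hd | hd⟩ | ⟨rfl, hd | hd⟩ <;>
    simp only [columnEdges, mem_biUnion, mem_Icc, mem_insert, mem_singleton, Sym2.eq_iff,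
      Prod.mk.injEq, true_and]
  · exact ⟨qy, by omega, by omega⟩
  · exact ⟨py, by omega, by omega⟩
  · exact ⟨py, by omega, by omega⟩
  · exact ⟨py, by omega, by omega⟩

namespace GridPath

variable (P : GridPath)

def minX : ℤ := univ.inf' univ_nonempty fun i => (P.pts i).1

def maxX : ℤ := univ.sup' univ_nonempty fun i => (P.pts i).1

theorem minX_le (i : Fin (P.len + 1)) : P.minX ≤ (P.pts i).1 := inf'_le _ (mem_univ i)

theorem le_maxX (i : Fin (P.len + 1)) : (P.pts i).1 ≤ P.maxX :=
  le_sup' (fun i => (P.pts i).1) (mem_univ i)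

theorem exists_fst_eq_minX : ∃ i, (P.pts i).1 = P.minX := by
  obtain ⟨i, -, hi⟩ := exists_mem_eq_inf' univ_nonempty fun i => (P.pts i).1
  exact ⟨i, hi.symm⟩

theorem exists_fst_eq_maxX : ∃ i, (P.pts i).1 = P.maxX := by
  obtain ⟨i, -, hi⟩ := exists_mem_eq_sup' univ_nonempty fun i => (P.pts i).1
  exact ⟨i, hi.symm⟩

theorem minX_le_maxX : P.minX ≤ P.maxX := (P.minX_le 0).trans (P.le_maxX 0)

theorem exists_fst_eq {x : ℤ} (hx₁ : P.minX ≤ x) (hx₂ : x ≤ P.maxX) :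
    ∃ i, (P.pts i).1 = x := by
  have hconn : (Set.range fun i => (P.pts i).1).OrdConnected :=
    Set.ordConnected_range_of_abs_sub_le_one fun i => by
      have := P.adj i
      unfold adjPt at this
      rw [abs_le]; omega
  exact hconn.out P.exists_fst_eq_minX P.exists_fst_eq_maxX ⟨hx₁, hx₂⟩

theorem fst_mem_Icc_of_mem_points {p : ℤ × ℤ} (hp : p ∈ P.points) :
    P.minX ≤ p.1 ∧ p.1 ≤ P.maxX := by
  obtain ⟨i, rfl⟩ := hp
  exact ⟨P.minX_le i, P.le_maxX i⟩

theorem mem_points_of_mem_edges {e : Sym2 (ℤ × ℤ)} (he : e ∈ P.edges) {p : ℤ × ℤ} (hp : p ∈ e) :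
    p ∈ P.points := by
  obtain ⟨i, rfl⟩ := he
  rcases Sym2.mem_iff.1 hp with rfl | rfl
  exacts [⟨_, rfl⟩, ⟨_, rfl⟩]

theorem len_ne_zero_of_mem_edges {e : Sym2 (ℤ × ℤ)} (he : e ∈ P.edges) : P.len ≠ 0 := by
  obtain ⟨i, -⟩ := he
  exact i.pos.ne'

def transpose : GridPath where
  len := P.len
  pts := Prod.swap ∘ P.pts
  adj i := by
    have := P.adj i
    unfold adjPt at this ⊢
    simp only [Function.comp_apply, Prod.fst_swap, Prod.snd_swap]
    tauto
  inj := Prod.swap_injective.comp P.inj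

theorem edges_transpose : P.transpose.edges = Sym2.map Prod.swap '' P.edges := by
  ext e
  simp [edges, transpose, eq_comm]

variable {P} {w h : ℕ}

theorem InGrid.one_le_height (hP : P.InGrid w h) : 1 ≤ h := by
  have := hP _ ⟨0, rfl⟩
  omega

theorem InGrid.one_le_minX (hP : P.InGrid w h) : 1 ≤ P.minX := by
  obtain ⟨i, hi⟩ := P.exists_fst_eq_minX
  exact hi ▸ (hP _ ⟨i, rfl⟩).1

theorem InGrid.exists_mem_columnEdges_mem_edges (hP : P.InGrid w h) (hlen : P.len ≠ 0)
    (i : Fin (P.len + 1)) : ∃ e ∈ columnEdges h (P.pts i).1, e ∈ P.edges := by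
  have hrow : ∀ j, 1 ≤ (P.pts j).2 ∧ (P.pts j).2 ≤ h := fun j =>
    ⟨(hP _ ⟨j, rfl⟩).2.2.1, (hP _ ⟨j, rfl⟩).2.2.2⟩
  obtain ⟨j, rfl | rfl⟩ : ∃ j : Fin P.len, i = j.castSucc ∨ i = j.succ := by
    rcases Fin.eq_zero_or_eq_succ i with rfl | ⟨j, rfl⟩
    · exact ⟨⟨0, Nat.pos_of_ne_zero hlen⟩, Or.inl rfl⟩
    · exact ⟨j, Or.inr rfl⟩
  · exact ⟨_, mk_mem_columnEdges (P.adj j) (hrow _) (hrow _), ⟨j, rfl⟩⟩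
  · exact ⟨_, mk_mem_columnEdges (adjPt_comm.1 (P.adj j)) (hrow _) (hrow _), ⟨j, Sym2.eq_swap⟩⟩

theorem InGrid.transpose (hP : P.InGrid w h) : P.transpose.InGrid h w := by
  rintro _ ⟨i, rfl⟩
  have := hP _ ⟨i, rfl⟩
  simp only [GridPath.transpose]
  tauto

end GridPath

/-- Single-point paths have no edges, so their vertices are isolated in `G`; they are parked on
pairwise distinct points to the left of the grid. -/
noncomputable def spanLeft {V : Type*} [Fintype V] (rep : V → GridPath) (v : V) : ℝ :=
  if (rep v).len = 0 then -(Fintype.equivFin V v + 1 : ℝ) else (rep v).minX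

noncomputable def spanRight {V : Type*} [Fintype V] (rep : V → GridPath) (v : V) : ℝ :=
  if (rep v).len = 0 then -(Fintype.equivFin V v + 1 : ℝ) else (rep v).maxX

theorem spanLeft_le_spanRight {V : Type*} [Fintype V] (rep : V → GridPath) (v : V) :
    spanLeft rep v ≤ spanRight rep v := by
  unfold spanLeft spanRight
  split_ifs
  exacts [le_rfl, Int.cast_le.2 (rep v).minX_le_maxX]

namespace IsEPGRep

variable {V : Type*} {G : SimpleGraph V} {rep : V → GridPath}

theorem transpose (hrep : IsEPGRep G rep) : IsEPGRep G fun v => (rep v).transpose := by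
  intro u v
  simp only [hrep u v, GridPath.edges_transpose,
    ← Set.image_inter (Sym2.map.injective Prod.swap_injective), Set.image_nonempty]

theorem card_le_two_of_forall_mem_edges (hG : G.CliqueFree 3) (hrep : IsEPGRep G rep)
    {s : Finset V} {e : Sym2 (ℤ × ℤ)} (hs : ∀ u ∈ s, e ∈ (rep u).edges) : #s ≤ 2 := by
  classical
  by_contra! hlt
  obtain ⟨a, ha, b, hb, c, hc, hab, hac, hbc⟩ := two_lt_card.1 hlt
  exact hG {a, b, c} (SimpleGraph.is3Clique_triple_iff.2
    ⟨(hrep a b).2 ⟨hab, e, hs a ha, hs b hb⟩, (hrep a c).2 ⟨hac, e, hs a ha, hs c hc⟩,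
      (hrep b c).2 ⟨hbc, e, hs b hb, hs c hc⟩⟩)

theorem card_le_two_mul_card [Fintype V] (hG : G.CliqueFree 3) (hrep : IsEPGRep G rep)
    {s : Finset V} {E : Finset (Sym2 (ℤ × ℤ))} (hs : ∀ u ∈ s, ∃ e ∈ E, e ∈ (rep u).edges) :
    #s ≤ 2 * #E := by
  classical
  calc #s ≤ #(E.biUnion fun e => {u | e ∈ (rep u).edges}) := card_le_card fun u hu => by
        obtain ⟨e, he, hue⟩ := hs u hu
        exact mem_biUnion.2 ⟨e, he, by simpa using hue⟩
    _ ≤ ∑ e ∈ E, #{u | e ∈ (rep u).edges} := card_biUnion_le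
    _ ≤ ∑ _e ∈ E, 2 := sum_le_sum fun e _ =>
        hrep.card_le_two_of_forall_mem_edges hG fun u hu => by simpa using hu
    _ = 2 * #E := by rw [sum_const, smul_eq_mul, mul_comm]

variable [Fintype V] {w h : ℕ}

theorem card_filter_spanning_le (hG : G.CliqueFree 3) (hrep : IsEPGRep G rep)
    (hgrid : ∀ v, (rep v).InGrid w h) (x : ℤ) :
    #{u | (rep u).len ≠ 0 ∧ (rep u).minX ≤ x ∧ x ≤ (rep u).maxX} ≤ 6 * h := by
  calc _ ≤ 2 * #(columnEdges h x) := hrep.card_le_two_mul_card hG fun u hu => by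
        simp only [mem_filter, mem_univ, true_and] at hu
        obtain ⟨i, rfl⟩ := (rep u).exists_fst_eq hu.2.1 hu.2.2
        exact (hgrid u).exists_mem_columnEdges_mem_edges hu.1 i
    _ ≤ 6 * h := by linarith [card_columnEdges_le h x]

theorem span_inter_nonempty_of_adj (hrep : IsEPGRep G rep) {u v : V} (huv : G.Adj u v) :
    (Set.Icc (spanLeft rep u) (spanRight rep u) ∩
      Set.Icc (spanLeft rep v) (spanRight rep v)).Nonempty := by
  obtain ⟨-, e, heu, hev⟩ := (hrep u v).1 huv
  have hu := (rep u).len_ne_zero_of_mem_edges heu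
  have hv := (rep v).len_ne_zero_of_mem_edges hev
  obtain ⟨i, rfl⟩ := heu
  have hpu := (rep u).fst_mem_Icc_of_mem_points ⟨i.castSucc, rfl⟩
  have hpv := (rep v).fst_mem_Icc_of_mem_points
    ((rep v).mem_points_of_mem_edges hev (Sym2.mem_mk_left _ _))
  refine ⟨((rep u).pts i.castSucc).1, ?_, ?_⟩ <;>
    simp only [spanLeft, spanRight, hu, hv, if_false, Set.mem_Icc] <;> exact_mod_cast ‹_›

theorem card_span_ply_le (hG : G.CliqueFree 3) (hrep : IsEPGRep G rep)
    (hgrid : ∀ v, (rep v).InGrid w h) (v : V) :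
    #{u | spanLeft rep u ≤ spanLeft rep v ∧ spanLeft rep v ≤ spanRight rep u} ≤ 6 * h := by
  have hpos : ∀ u, (rep u).len ≠ 0 → 1 ≤ spanLeft rep u := fun u hu => by
    simpa [spanLeft, hu] using Int.cast_le (R := ℝ) |>.2 (hgrid u).one_le_minX
  have hzero : ∀ u, (rep u).len = 0 → spanLeft rep u = spanRight rep u ∧ spanRight rep u < 0 :=
    fun u hu => by
      simpa only [spanLeft, spanRight, hu, if_true, neg_lt_zero, true_and] using by positivity
  by_cases hv : (rep v).len = 0
  · have hv_only : ∀ u, spanLeft rep u ≤ spanLeft rep v → spanLeft rep v ≤ spanRight rep u →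
        u = v := fun u h₁ h₂ => by
      by_cases hu : (rep u).len = 0
      · simp only [spanLeft, spanRight, hu, hv, if_true, neg_le_neg_iff, add_le_add_iff_right,
          Nat.cast_le] at h₁ h₂
        exact (Fintype.equivFin V).injective (Fin.ext (le_antisymm h₂ h₁))
      · linarith [hpos u hu, hzero v hv]
    calc _ ≤ 1 := card_le_one.2 fun a ha b hb => by
          simp only [mem_filter, mem_univ, true_and] at ha hb
          rw [hv_only a ha.1 ha.2, hv_only b hb.1 hb.2]
      _ ≤ 6 * h := by have := (hgrid v).one_le_height; omega
  · calc _ ≤ #{u | (rep u).len ≠ 0 ∧ (rep u).minX ≤ (rep v).minX ∧ (rep v).minX ≤ (rep u).maxX} :=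
          card_le_card fun u hu => by
            simp only [mem_filter, mem_univ, true_and] at hu ⊢
            have hu0 : (rep u).len ≠ 0 := fun hu0 => by linarith [hzero u hu0, hpos v hv, hu.2]
            simp only [spanLeft, spanRight, hu0, hv, if_false] at hu
            exact ⟨hu0, by exact_mod_cast hu.1, by exact_mod_cast hu.2⟩
      _ ≤ 6 * h := hrep.card_filter_spanning_le hG hgrid _

theorem pwLE_six_mul_sub_one (hG : G.CliqueFree 3) (hrep : IsEPGRep G rep)
    (hgrid : ∀ v, (rep v).InGrid w h) : pwLE G (6 * h - 1) :=
  pwLE_of_intervals G _ _ (spanLeft_le_spanRight rep) (fun _ _ => hrep.span_inter_nonempty_of_adj)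
    (hrep.card_span_ply_le hG hgrid)

end IsEPGRep

theorem stmt4_general {V : Type*} [Fintype V] [Nonempty V] (G : SimpleGraph V)
    (hG : G.CliqueFree 3) (k : ℕ)
    (hpwge : ∀ j, pwLE G j → k ≤ j)
    (rep : V → GridPath) (hrep : IsEPGRep G rep)
    (w h : ℕ) (hgrid : ∀ v, (rep v).InGrid w h) :
    ((k : ℝ) + 1) / 6 ≤ (h : ℝ) ∧ ((k : ℝ) + 1) / 6 ≤ (w : ℝ) ∧
      (((k : ℝ) + 1) * ((k : ℝ) + 1)) / 36 ≤ (w : ℝ) * (h : ℝ) := by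
  obtain ⟨v⟩ := ‹Nonempty V›
  have hrows : k + 1 ≤ 6 * h := by
    have := hpwge _ (hrep.pwLE_six_mul_sub_one hG hgrid)
    have := (hgrid v).one_le_height
    omega
  have hcols : k + 1 ≤ 6 * w := by
    have := hpwge _ (hrep.transpose.pwLE_six_mul_sub_one hG fun v => (hgrid v).transpose)
    have := (hgrid v).transpose.one_le_height
    omega
  have hrows' : ((k : ℝ) + 1) / 6 ≤ h := (div_le_iff₀' (by norm_num)).2 (by exact_mod_cast hrows)
  have hcols' : ((k : ℝ) + 1) / 6 ≤ w := (div_le_iff₀' (by norm_num)).2 (by exact_mod_cast hcols)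
  refine ⟨hrows', hcols', ?_⟩
  calc ((k : ℝ) + 1) * (k + 1) / 36 = ((k + 1) / 6) * ((k + 1) / 6) := by ring
    _ ≤ w * h := mul_le_mul hcols' hrows' (by positivity) (by positivity)

/-- A triangle-free graph of pathwidth `k` needs at least `(k+1)/6` rows and
`(k+1)/6` columns, hence area at least `(k+1)²/36 = Ω(k²)`, in any
EPG-representation. -/
theorem stmt4 {V : Type*} [Fintype V] [Nonempty V] (G : SimpleGraph V)
    (hG : G.CliqueFree 3) (k : ℕ)
    (hpwle : pwLE G k) (hpwge : ∀ j, pwLE G j → k ≤ j)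
    (rep : V → GridPath) (hrep : IsEPGRep G rep)
    (w h : ℕ) (hgrid : ∀ v, (rep v).InGrid w h) :
    ((k : ℝ) + 1) / 6 ≤ (h : ℝ) ∧ ((k : ℝ) + 1) / 6 ≤ (w : ℝ) ∧
      (((k : ℝ) + 1) * ((k : ℝ) + 1)) / 36 ≤ (w : ℝ) * (h : ℝ) :=
  stmt4_general G hG k hpwge rep hrep w h hgrid
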